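/- In the case $n = 2$ (two rows), for any three monomials $w_1,w_2,w_3$ in variables $x_1,\dots,x_m$, the identity $2[w_1w_2w_3] = [w_1w_2][w_3] + [w_1w_3][w_2] + [w_2w_3][w_1] - [w_1][w_2][w_3]$ holds. -/

import Mathlib

/-!
Writing `u i, v i, t i` for the values of `w₁, w₂, w₃` on row `i`, every bracket is a power
sum over the two rows, and the relation is the polarization of the vanishing of the third
elementary symmetric polynomial in two variables: an identity in any commutative ring.
-/

open MvPolynomial

/-- The polarized power sum `[w]` for `n = 2`. -/
noncomputable def pp2 (m : ℕ) (α : Fin m → ℕ) : MvPolynomial (Fin 2 × Fin m) ℂ :=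
  ∑ i : Fin 2, ∏ j : Fin m, X (i, j) ^ α j

theorem two_mul_sum_fin_two_mul_mul {R : Type*} [CommRing R] (u v t : Fin 2 → R) :
    2 * ∑ i, u i * v i * t i
    = (∑ i, u i * v i) * ∑ i, t i + (∑ i, u i * t i) * ∑ i, v i + (∑ i, v i * t i) * ∑ i, u i
      - (∑ i, u i) * (∑ i, v i) * ∑ i, t i := by
  simp only [Fin.sum_univ_two]
  ring

noncomputable def rowMonomial (m : ℕ) (α : Fin m → ℕ) (i : Fin 2) :
    MvPolynomial (Fin 2 × Fin m) ℂ :=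
  ∏ j : Fin m, X (i, j) ^ α j

theorem rowMonomial_add (m : ℕ) (α β : Fin m → ℕ) (i : Fin 2) :
    rowMonomial m (α + β) i = rowMonomial m α i * rowMonomial m β i := by
  simp only [rowMonomial, Pi.add_apply, pow_add, Finset.prod_mul_distrib]

theorem pp2_eq_sum_rowMonomial (m : ℕ) (α : Fin m → ℕ) :
    pp2 m α = ∑ i, rowMonomial m α i :=
  rfl

/-- the fundamental relation `Ψ₃(w₁,w₂,w₃) = 0` for `n = 2`. -/
theorem fundamental_relation_two (m : ℕ) (a b c : Fin m → ℕ) :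
    2 * pp2 m (a + b + c)
    = pp2 m (a + b) * pp2 m c + pp2 m (a + c) * pp2 m b + pp2 m (b + c) * pp2 m a
      - pp2 m a * pp2 m b * pp2 m c := by
  simp only [pp2_eq_sum_rowMonomial, rowMonomial_add]
  exact two_mul_sum_fin_two_mul_mul _ _ _
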